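/- arXiv:1307.7473 — 3 statements merged into one kernel-verified Lean document; each statement's English description precedes it below -/
import Mathlib

section
/- Comparison principle toward y0: let (a_k, b_k, V_k), k = 1,2, be two coefficient triples on (x0,y0) satisfying the standing assumptions, with associated s_k', m_k' and iterated integrals I_{n,k}^W (all based at c). Assume a_1(x) ≥ a_2(x), V_2(x) ≥ V_1(x), and b_1(x)/a_1(x) ≤ b_2(x)/a_2(x) for a.e. x ∈ [c, y0). If ∫_c^{y0} (∑_{n≥0} I_{n,1}^{V_1+1}(y)) m_1'(y) dy = +∞, then ∫_c^{y0} (∑_{n≥0} I_{n,2}^{V_2+1}(y)) m_2'(y) dy = +∞; i.e. if y0 is no entrance boundary for L_1 = a_1 d²/dx² + b_1 d/dx − V_1, then it is no entrance boundary for L_2 = a_2 d²/dx² + b_2 d/dx − V_2. -/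
open MeasureTheory Set Filter

noncomputable section

/-- The open interval `(x0, y0)` in `ℝ`, with extended-real endpoints. -/
def EI (x0 y0 : EReal) : Set ℝ := {x : ℝ | x0 < (x : EReal) ∧ (x : EReal) < y0}

/-- `f` is locally essentially bounded on `(x0, y0)`. -/
def LocEssBdd (x0 y0 : EReal) (f : ℝ → ℝ) : Prop :=
  ∀ u v : ℝ, x0 < (u : EReal) → (v : EReal) < y0 →
    ∃ C : ℝ, ∀ᵐ x ∂(volume.restrict (Icc u v)), |f x| ≤ C

/-- Derivative `s'` of Feller's scale function, with base point `c`. -/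
def sder (a b : ℝ → ℝ) (c x : ℝ) : ℝ := Real.exp (-∫ t in c..x, b t / a t)

/-- Derivative `m'` of Feller's speed function, with base point `c`. -/
def mder (a b : ℝ → ℝ) (c x : ℝ) : ℝ :=
  (1 / a x) * Real.exp (∫ t in c..x, b t / a t)

/-- Iterated integrals `I_n^W` toward `y0`, base point `c`. -/
def Ifun (a b : ℝ → ℝ) (c : ℝ) (W : ℝ → ℝ) : ℕ → ℝ → ℝ
  | 0, _ => 1
  | n + 1, y =>
      ∫ r in c..y, sder a b c r * ∫ t in c..r, mder a b c t * W t * Ifun a b c W n t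

/-- Iterated integrals `J_n^W` toward `x0`, base point `c`. -/
def Jfun (a b : ℝ → ℝ) (c : ℝ) (W : ℝ → ℝ) : ℕ → ℝ → ℝ
  | 0, _ => 1
  | n + 1, y =>
      ∫ r in y..c, sder a b c r * ∫ t in r..c, mder a b c t * W t * Jfun a b c W n t

/-- The speed measure `m = m'(x) dx` on `(x0, y0)`. -/
def speedMeasure (x0 y0 : EReal) (a b : ℝ → ℝ) (c : ℝ) : Measure ℝ :=
  (volume.restrict (EI x0 y0)).withDensity fun x => ENNReal.ofReal (mder a b c x)

/-- Smooth compactly supported test functions supported in `S`. -/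
def IsTestFun (S : Set ℝ) (f : ℝ → ℝ) : Prop :=
  ContDiff ℝ (⊤ : ℕ∞) f ∧ HasCompactSupport f ∧ tsupport f ⊆ S

/-- Sturm–Liouville operator `L^V f = a f'' + b f' - V f`. -/
def SLop (a b V : ℝ → ℝ) (f : ℝ → ℝ) (x : ℝ) : ℝ :=
  a x * deriv (deriv f) x + b x * deriv f x - V x * f x

/-- `y0` is a "no entrance" boundary for the potential `W`:
`∫_c^{y0} (∑_n I_n^W(y)) m'(y) dy = +∞`. -/
def noEntranceTop (y0 : EReal) (a b : ℝ → ℝ) (c : ℝ) (W : ℝ → ℝ) : Prop :=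
  ∫⁻ y in {y : ℝ | c < y ∧ (y : EReal) < y0},
    (∑' n : ℕ, ENNReal.ofReal (Ifun a b c W n y)) * ENNReal.ofReal (mder a b c y) = ⊤

/-- `x0` is a "no entrance" boundary for the potential `W`:
`∫_{x0}^c (∑_n J_n^W(y)) m'(y) dy = +∞`. -/
def noEntranceBot (x0 : EReal) (a b : ℝ → ℝ) (c : ℝ) (W : ℝ → ℝ) : Prop :=
  ∫⁻ y in {y : ℝ | x0 < (y : EReal) ∧ y < c},
    (∑' n : ℕ, ENNReal.ofReal (Jfun a b c W n y)) * ENNReal.ofReal (mder a b c y) = ⊤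

section Aux

lemma boundedIntervalIntegrable {c v : ℝ} (hcv : c ≤ v) {f : ℝ → ℝ}
    (hf : AEStronglyMeasurable f (volume.restrict (Icc c v))) {C : ℝ}
    (hC : ∀ᵐ x ∂(volume.restrict (Icc c v)), |f x| ≤ C) :
    IntervalIntegrable f volume c v := by
  have hfin : IsFiniteMeasure (volume.restrict (Icc c v)) :=
    ⟨by rw [Measure.restrict_apply_univ]; exact measure_Icc_lt_top⟩
  have hint : IntegrableOn f (Icc c v) volume := by
    refine Integrable.mono' (integrable_const C) hf ?_
    simpa [Real.norm_eq_abs] using hC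
  rw [intervalIntegrable_iff_integrableOn_Ioc_of_le hcv]
  exact hint.mono_set Ioc_subset_Icc_self

lemma locEssBdd_bound {x0 y0 : EReal} {f : ℝ → ℝ} (hf : LocEssBdd x0 y0 f)
    {c v : ℝ} (hc : x0 < (c : EReal)) (hv : (v : EReal) < y0) :
    ∃ C : ℝ, 0 ≤ C ∧ ∀ᵐ x ∂(volume.restrict (Icc c v)), |f x| ≤ C := by
  obtain ⟨C, hC⟩ := hf c v hc hv
  exact ⟨max C 0, le_max_right _ _, hC.mono fun x hx => hx.trans (le_max_left _ _)⟩

lemma q_intInt {x0 y0 : EReal} {a b : ℝ → ℝ} {c v : ℝ}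
    (hc : x0 < (c : EReal)) (hcv : c ≤ v) (hv : (v : EReal) < y0)
    (ha : Measurable a) (hb : Measurable b)
    (hbB : LocEssBdd x0 y0 b) (hainvB : LocEssBdd x0 y0 (fun x => 1 / a x)) :
    IntervalIntegrable (fun t => b t / a t) volume c v := by
  obtain ⟨Cb, hCb0, hCb⟩ := locEssBdd_bound hbB hc hv
  obtain ⟨Ci, hCi0, hCi⟩ := locEssBdd_bound hainvB hc hv
  refine boundedIntervalIntegrable hcv (hb.div ha).aestronglyMeasurable (C := Cb * Ci) ?_
  filter_upwards [hCb, hCi] with x h1 h2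
  have he : b x / a x = b x * (1 / a x) := by ring
  rw [he, abs_mul]
  exact mul_le_mul h1 h2 (abs_nonneg _) hCb0

lemma B_contOn {x0 y0 : EReal} {a b : ℝ → ℝ} {c v : ℝ}
    (hc : x0 < (c : EReal)) (hcv : c ≤ v) (hv : (v : EReal) < y0)
    (ha : Measurable a) (hb : Measurable b)
    (hbB : LocEssBdd x0 y0 b) (hainvB : LocEssBdd x0 y0 (fun x => 1 / a x)) :
    ContinuousOn (fun x => ∫ t in c..x, b t / a t) (Icc c v) := by
  have h := intervalIntegral.continuousOn_primitive_interval'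
    (q_intInt hc hcv hv ha hb hbB hainvB) (left_mem_uIcc (a := c) (b := v))
  rwa [uIcc_of_le hcv] at h

lemma inner_reg {x0 y0 : EReal} {a b V : ℝ → ℝ} {c : ℝ}
    (hc : x0 < (c : EReal))
    (ha : Measurable a) (hb : Measurable b) (hV : Measurable V)
    (hbB : LocEssBdd x0 y0 b) (hVB : LocEssBdd x0 y0 V)
    (hainvB : LocEssBdd x0 y0 (fun x => 1 / a x))
    (hapos : ∀ᵐ x ∂(volume.restrict (EI x0 y0)), 0 < a x)
    (hVnn : ∀ x ∈ EI x0 y0, 0 ≤ V x)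
    (I : ℝ → ℝ)
    (hIc : ∀ v : ℝ, c ≤ v → (v : EReal) < y0 → ContinuousOn I (Icc c v))
    (hInn : ∀ y : ℝ, c ≤ y → (y : EReal) < y0 → 0 ≤ I y)
    {v : ℝ} (hcv : c ≤ v) (hv : (v : EReal) < y0) :
    IntervalIntegrable (fun t => mder a b c t * (V t + 1) * I t) volume c v ∧
    ContinuousOn (fun r => ∫ t in c..r, mder a b c t * (V t + 1) * I t) (Icc c v) ∧
    ∀ r ∈ Icc c v, 0 ≤ ∫ t in c..r, mder a b c t * (V t + 1) * I t := by
  have hsub : Icc c v ⊆ EI x0 y0 := fun x hx =>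
    ⟨lt_of_lt_of_le hc (EReal.coe_le_coe_iff.2 hx.1),
     lt_of_le_of_lt (EReal.coe_le_coe_iff.2 hx.2) hv⟩
  have hBc : ContinuousOn (fun x => ∫ t in c..x, b t / a t) (Icc c v) :=
    B_contOn hc hcv hv ha hb hbB hainvB
  have hEc : ContinuousOn (fun x => Real.exp (∫ t in c..x, b t / a t)) (Icc c v) :=
    Real.continuous_exp.comp_continuousOn hBc
  have hIcv := hIc v hcv hv
  have hmeas : AEStronglyMeasurable (fun t => mder a b c t * (V t + 1) * I t)
      (volume.restrict (Icc c v)) := by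
    have h1 : AEStronglyMeasurable (fun t => 1 / a t) (volume.restrict (Icc c v)) :=
      (measurable_const.div ha).aestronglyMeasurable
    have h2 : AEStronglyMeasurable (fun x => Real.exp (∫ t in c..x, b t / a t))
        (volume.restrict (Icc c v)) := hEc.aestronglyMeasurable measurableSet_Icc
    have h3 : AEStronglyMeasurable (fun t => V t + 1) (volume.restrict (Icc c v)) :=
      (hV.add measurable_const).aestronglyMeasurable
    have h4 : AEStronglyMeasurable I (volume.restrict (Icc c v)) :=
      hIcv.aestronglyMeasurable measurableSet_Icc
    exact ((h1.mul h2).mul h3).mul h4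
  obtain ⟨Ci, hCi0, hCi⟩ := locEssBdd_bound hainvB hc hv
  obtain ⟨Cv, hCv0, hCv⟩ := locEssBdd_bound hVB hc hv
  obtain ⟨Ce, hCe⟩ := isCompact_Icc.exists_bound_of_continuousOn hEc
  obtain ⟨CI, hCI⟩ := isCompact_Icc.exists_bound_of_continuousOn hIcv
  have hII : IntervalIntegrable (fun t => mder a b c t * (V t + 1) * I t) volume c v := by
    refine boundedIntervalIntegrable hcv hmeas (C := Ci * |Ce| * (Cv + 1) * |CI|) ?_
    filter_upwards [hCi, hCv, ae_restrict_mem measurableSet_Icc] with x h1 h2 hx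
    have e1 : mder a b c x * (V x + 1) * I x
        = ((1 / a x) * Real.exp (∫ t in c..x, b t / a t)) * (V x + 1) * I x := rfl
    have b1 : |Real.exp (∫ t in c..x, b t / a t)| ≤ |Ce| := by
      have := hCe x hx
      rw [Real.norm_eq_abs] at this
      exact this.trans (le_abs_self _)
    have b2 : |V x + 1| ≤ Cv + 1 := (abs_add_le _ _).trans (by simpa using add_le_add_right h2 1)
    have b3 : |I x| ≤ |CI| := by
      have := hCI x hx
      rw [Real.norm_eq_abs] at this
      exact this.trans (le_abs_self _)
    rw [e1, abs_mul, abs_mul, abs_mul]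
    have k1 : |1 / a x| * |Real.exp (∫ t in c..x, b t / a t)| ≤ Ci * |Ce| :=
      mul_le_mul h1 b1 (abs_nonneg _) hCi0
    have k2 : |1 / a x| * |Real.exp (∫ t in c..x, b t / a t)| * |V x + 1|
        ≤ Ci * |Ce| * (Cv + 1) :=
      mul_le_mul k1 b2 (abs_nonneg _) (by positivity)
    exact mul_le_mul k2 b3 (abs_nonneg _) (by positivity)
  refine ⟨hII, ?_, ?_⟩
  · have h := intervalIntegral.continuousOn_primitive_interval' hII
      (left_mem_uIcc (a := c) (b := v))
    rwa [uIcc_of_le hcv] at h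
  · intro r hr
    have hposr : ∀ᵐ x ∂(volume.restrict (Icc c r)), 0 < a x :=
      ae_restrict_of_ae_restrict_of_subset ((Icc_subset_Icc le_rfl hr.2).trans hsub) hapos
    apply intervalIntegral.integral_nonneg_of_ae_restrict hr.1
    filter_upwards [hposr, ae_restrict_mem measurableSet_Icc] with x hax hx
    have hx' : x ∈ Icc c v := Icc_subset_Icc le_rfl hr.2 hx
    have hW : (0:ℝ) ≤ V x + 1 := by have := hVnn x (hsub hx'); linarith
    have hI0 : 0 ≤ I x := hInn x hx'.1 (lt_of_le_of_lt (EReal.coe_le_coe_iff.2 hx'.2) hv)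
    have hm : 0 ≤ mder a b c x :=
      mul_nonneg (le_of_lt (one_div_pos.2 hax)) (Real.exp_nonneg _)
    exact mul_nonneg (mul_nonneg hm hW) hI0

lemma Ifun_reg {x0 y0 : EReal} {a b V : ℝ → ℝ} {c : ℝ}
    (hc : x0 < (c : EReal))
    (ha : Measurable a) (hb : Measurable b) (hV : Measurable V)
    (hbB : LocEssBdd x0 y0 b) (hVB : LocEssBdd x0 y0 V)
    (hainvB : LocEssBdd x0 y0 (fun x => 1 / a x))
    (hapos : ∀ᵐ x ∂(volume.restrict (EI x0 y0)), 0 < a x)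
    (hVnn : ∀ x ∈ EI x0 y0, 0 ≤ V x) :
    ∀ n : ℕ, (∀ v : ℝ, c ≤ v → (v : EReal) < y0 →
        ContinuousOn (Ifun a b c (fun x => V x + 1) n) (Icc c v)) ∧
      (∀ y : ℝ, c ≤ y → (y : EReal) < y0 → 0 ≤ Ifun a b c (fun x => V x + 1) n y) := by
  intro n
  induction n with
  | zero =>
    constructor
    · intro v _ _
      have h : Ifun a b c (fun x => V x + 1) 0 = fun _ => 1 := rfl
      rw [h]; exact continuousOn_const
    · intro y _ _; exact zero_le_one
  | succ n ih =>
    have key := fun (v : ℝ) (hcv : c ≤ v) (hv : (v : EReal) < y0) =>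
      inner_reg hc ha hb hV hbB hVB hainvB hapos hVnn _ ih.1 ih.2 hcv hv
    have hfun : Ifun a b c (fun x => V x + 1) (n + 1)
        = fun y => ∫ r in c..y, sder a b c r *
            ∫ t in c..r, mder a b c t * (V t + 1) * Ifun a b c (fun x => V x + 1) n t := rfl
    constructor
    · intro v hcv hv
      rw [hfun]
      have hcont : ContinuousOn (fun r => sder a b c r *
          ∫ t in c..r, mder a b c t * (V t + 1) * Ifun a b c (fun x => V x + 1) n t)
          (Icc c v) := by
        have h1 : ContinuousOn (fun r => sder a b c r) (Icc c v) :=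
          Real.continuous_exp.comp_continuousOn
            (B_contOn hc hcv hv ha hb hbB hainvB).neg
        exact h1.mul (key v hcv hv).2.1
      have hint : IntervalIntegrable (fun r => sder a b c r *
          ∫ t in c..r, mder a b c t * (V t + 1) * Ifun a b c (fun x => V x + 1) n t)
          volume c v := by
        apply ContinuousOn.intervalIntegrable
        rwa [uIcc_of_le hcv]
      have h := intervalIntegral.continuousOn_primitive_interval' hint
        (left_mem_uIcc (a := c) (b := v))
      rwa [uIcc_of_le hcv] at h
    · intro y hcy hy
      rw [hfun]
      apply intervalIntegral.integral_nonneg hcy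
      intro r hr
      exact mul_nonneg (Real.exp_nonneg _) ((key y hcy hy).2.2 r hr)

end Aux

/-- comparison principle toward `y0`: if `a1 ≥ a2`, `V2 ≥ V1` and
`b1/a1 ≤ b2/a2` a.e. on `[c, y0)`, and `y0` is no entrance boundary for
`L_1 = a1 d²/dx² + b1 d/dx - V1`, then it is no entrance boundary for
`L_2 = a2 d²/dx² + b2 d/dx - V2`. -/
theorem stmt13
    (x0 y0 : EReal) (hxy : x0 < y0)
    (a1 b1 V1 a2 b2 V2 : ℝ → ℝ) (c : ℝ)
    (hc : x0 < (c : EReal) ∧ (c : EReal) < y0)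
    (ha1 : Measurable a1) (hb1 : Measurable b1) (hV1 : Measurable V1)
    (ha2 : Measurable a2) (hb2 : Measurable b2) (hV2 : Measurable V2)
    (ha1B : LocEssBdd x0 y0 a1) (hb1B : LocEssBdd x0 y0 b1) (hV1B : LocEssBdd x0 y0 V1)
    (ha1invB : LocEssBdd x0 y0 (fun x => 1 / a1 x))
    (ha2B : LocEssBdd x0 y0 a2) (hb2B : LocEssBdd x0 y0 b2) (hV2B : LocEssBdd x0 y0 V2)
    (ha2invB : LocEssBdd x0 y0 (fun x => 1 / a2 x))
    (ha1pos : ∀ᵐ x ∂(volume.restrict (EI x0 y0)), 0 < a1 x)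
    (ha2pos : ∀ᵐ x ∂(volume.restrict (EI x0 y0)), 0 < a2 x)
    (hV1nn : ∀ x ∈ EI x0 y0, 0 ≤ V1 x)
    (hV2nn : ∀ x ∈ EI x0 y0, 0 ≤ V2 x)
    (hcomp : ∀ᵐ x ∂(volume.restrict {x : ℝ | c ≤ x ∧ (x : EReal) < y0}),
      a2 x ≤ a1 x ∧ V1 x ≤ V2 x ∧ b1 x / a1 x ≤ b2 x / a2 x)
    (h1 : noEntranceTop y0 a1 b1 c (fun x => V1 x + 1)) :
    noEntranceTop y0 a2 b2 c (fun x => V2 x + 1) := by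
  obtain ⟨hcx0, hcy0⟩ := hc
  have reg1 := Ifun_reg hcx0 ha1 hb1 hV1 hb1B hV1B ha1invB ha1pos hV1nn
  have reg2 := Ifun_reg hcx0 ha2 hb2 hV2 hb2B hV2B ha2invB ha2pos hV2nn
  have hq1 : ∀ v : ℝ, c ≤ v → (v : EReal) < y0 →
      IntervalIntegrable (fun t => b1 t / a1 t) volume c v :=
    fun v hcv hv => q_intInt hcx0 hcv hv ha1 hb1 hb1B ha1invB
  have hq2 : ∀ v : ℝ, c ≤ v → (v : EReal) < y0 →
      IntervalIntegrable (fun t => b2 t / a2 t) volume c v :=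
    fun v hcv hv => q_intInt hcx0 hcv hv ha2 hb2 hb2B ha2invB
  have hBd : ∀ r y : ℝ, c ≤ r → r ≤ y → (y : EReal) < y0 →
      (∫ t in c..y, b1 t / a1 t) - (∫ t in c..r, b1 t / a1 t) ≤
      (∫ t in c..y, b2 t / a2 t) - (∫ t in c..r, b2 t / a2 t) := by
    intro r y hcr hry hy
    have hcy : c ≤ y := hcr.trans hry
    have h1y := hq1 y hcy hy
    have h2y := hq2 y hcy hy
    have hsub1 : uIcc c r ⊆ uIcc c y := by
      rw [uIcc_of_le hcr, uIcc_of_le hcy]; exact Icc_subset_Icc le_rfl hry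
    have hsub2 : uIcc r y ⊆ uIcc c y := by
      rw [uIcc_of_le hry, uIcc_of_le hcy]; exact Icc_subset_Icc hcr le_rfl
    rw [intervalIntegral.integral_interval_sub_left h1y (h1y.mono_set hsub1),
        intervalIntegral.integral_interval_sub_left h2y (h2y.mono_set hsub1)]
    apply intervalIntegral.integral_mono_ae_restrict hry
      (h1y.mono_set hsub2) (h2y.mono_set hsub2)
    have hss : Icc r y ⊆ {x : ℝ | c ≤ x ∧ (x : EReal) < y0} := fun x hx =>
      ⟨hcr.trans hx.1, lt_of_le_of_lt (EReal.coe_le_coe_iff.2 hx.2) hy⟩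
    filter_upwards [ae_restrict_of_ae_restrict_of_subset hss hcomp] with x hx
    exact hx.2.2
  have hB0 : ∀ y : ℝ, c ≤ y → (y : EReal) < y0 →
      (∫ t in c..y, b1 t / a1 t) ≤ (∫ t in c..y, b2 t / a2 t) := by
    intro y hcy hy
    have h := hBd c y le_rfl hcy hy
    simpa [intervalIntegral.integral_same] using h
  have comp : ∀ n : ℕ, ∀ y : ℝ, c ≤ y → (y : EReal) < y0 →
      Ifun a1 b1 c (fun x => V1 x + 1) n y * Real.exp (∫ t in c..y, b1 t / a1 t) ≤
      Ifun a2 b2 c (fun x => V2 x + 1) n y * Real.exp (∫ t in c..y, b2 t / a2 t) := by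
    intro n
    induction n with
    | zero =>
      intro y hcy hy
      have h0 : Ifun a1 b1 c (fun x => V1 x + 1) 0 y = 1 := rfl
      have h0' : Ifun a2 b2 c (fun x => V2 x + 1) 0 y = 1 := rfl
      rw [h0, h0', one_mul, one_mul]
      exact Real.exp_le_exp.2 (hB0 y hcy hy)
    | succ n ih =>
      intro y hcy hy
      have in1 := inner_reg hcx0 ha1 hb1 hV1 hb1B hV1B ha1invB ha1pos hV1nn _
        (reg1 n).1 (reg1 n).2 hcy hy
      have in2 := inner_reg hcx0 ha2 hb2 hV2 hb2B hV2B ha2invB ha2pos hV2nn _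
        (reg2 n).1 (reg2 n).2 hcy hy
      have hGcomp : ∀ r ∈ Icc c y,
          (∫ t in c..r, mder a1 b1 c t * (V1 t + 1) * Ifun a1 b1 c (fun x => V1 x + 1) n t) ≤
          (∫ t in c..r, mder a2 b2 c t * (V2 t + 1) * Ifun a2 b2 c (fun x => V2 x + 1) n t) := by
        intro r hr
        have hsubr : uIcc c r ⊆ uIcc c y := by
          rw [uIcc_of_le hr.1, uIcc_of_le hcy]; exact Icc_subset_Icc le_rfl hr.2
        apply intervalIntegral.integral_mono_ae_restrict hr.1
          (in1.1.mono_set hsubr) (in2.1.mono_set hsubr)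
        have hssE : Icc c r ⊆ EI x0 y0 := fun x hx =>
          ⟨lt_of_lt_of_le hcx0 (EReal.coe_le_coe_iff.2 hx.1),
           lt_of_le_of_lt (EReal.coe_le_coe_iff.2 (hx.2.trans hr.2)) hy⟩
        have hssC : Icc c r ⊆ {x : ℝ | c ≤ x ∧ (x : EReal) < y0} := fun x hx =>
          ⟨hx.1, (hssE hx).2⟩
        filter_upwards [ae_restrict_of_ae_restrict_of_subset hssE ha1pos,
          ae_restrict_of_ae_restrict_of_subset hssE ha2pos,
          ae_restrict_of_ae_restrict_of_subset hssC hcomp,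
          ae_restrict_mem measurableSet_Icc] with t hp1 hp2 hcmp ht
        obtain ⟨haa, hVV, _⟩ := hcmp
        have htc : c ≤ t := ht.1
        have hty : (t : EReal) < y0 := (hssE ht).2
        have e1 : mder a1 b1 c t * (V1 t + 1) * Ifun a1 b1 c (fun x => V1 x + 1) n t
            = (1 / a1 t) * (V1 t + 1) *
              (Ifun a1 b1 c (fun x => V1 x + 1) n t *
                Real.exp (∫ s in c..t, b1 s / a1 s)) := by
          simp only [mder]; ring
        have e2 : mder a2 b2 c t * (V2 t + 1) * Ifun a2 b2 c (fun x => V2 x + 1) n t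
            = (1 / a2 t) * (V2 t + 1) *
              (Ifun a2 b2 c (fun x => V2 x + 1) n t *
                Real.exp (∫ s in c..t, b2 s / a2 s)) := by
          simp only [mder]; ring
        rw [e1, e2]
        have k1 : 0 ≤ 1 / a2 t := le_of_lt (one_div_pos.2 hp2)
        have k2 : 1 / a1 t ≤ 1 / a2 t := one_div_le_one_div_of_le hp2 haa
        have k3 : (0:ℝ) ≤ V1 t + 1 := by have := hV1nn t (hssE ht); linarith
        have k4 : V1 t + 1 ≤ V2 t + 1 := by linarith
        have k5 : 0 ≤ Ifun a1 b1 c (fun x => V1 x + 1) n t *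
            Real.exp (∫ s in c..t, b1 s / a1 s) :=
          mul_nonneg ((reg1 n).2 t htc hty) (Real.exp_nonneg _)
        have k6 := ih t htc hty
        exact mul_le_mul (mul_le_mul k2 k4 k3 k1) k6 k5 (mul_nonneg k1 (k3.trans k4))
      have key : ∀ r ∈ Icc c y,
          Real.exp (∫ t in c..y, b1 t / a1 t) * (sder a1 b1 c r *
            ∫ t in c..r, mder a1 b1 c t * (V1 t + 1) * Ifun a1 b1 c (fun x => V1 x + 1) n t) ≤
          Real.exp (∫ t in c..y, b2 t / a2 t) * (sder a2 b2 c r *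
            ∫ t in c..r, mder a2 b2 c t * (V2 t + 1) * Ifun a2 b2 c (fun x => V2 x + 1) n t) := by
        intro r hr
        have t1 : ∀ (X R G : ℝ), Real.exp X * (Real.exp (-R) * G) = Real.exp (X - R) * G := by
          intro X R G
          rw [Real.exp_sub, Real.exp_neg]
          ring
        have e1 : Real.exp (∫ t in c..y, b1 t / a1 t) * (sder a1 b1 c r *
            ∫ t in c..r, mder a1 b1 c t * (V1 t + 1) * Ifun a1 b1 c (fun x => V1 x + 1) n t)
            = Real.exp ((∫ t in c..y, b1 t / a1 t) - (∫ t in c..r, b1 t / a1 t)) *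
              ∫ t in c..r, mder a1 b1 c t * (V1 t + 1) * Ifun a1 b1 c (fun x => V1 x + 1) n t :=
          t1 _ _ _
        have e2 : Real.exp (∫ t in c..y, b2 t / a2 t) * (sder a2 b2 c r *
            ∫ t in c..r, mder a2 b2 c t * (V2 t + 1) * Ifun a2 b2 c (fun x => V2 x + 1) n t)
            = Real.exp ((∫ t in c..y, b2 t / a2 t) - (∫ t in c..r, b2 t / a2 t)) *
              ∫ t in c..r, mder a2 b2 c t * (V2 t + 1) * Ifun a2 b2 c (fun x => V2 x + 1) n t :=
          t1 _ _ _
        rw [e1, e2]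
        exact mul_le_mul (Real.exp_le_exp.2 (hBd r y hr.1 hr.2 hy)) (hGcomp r hr)
          (in1.2.2 r hr) (Real.exp_nonneg _)
      have hint1 : IntervalIntegrable (fun r => sder a1 b1 c r *
          ∫ t in c..r, mder a1 b1 c t * (V1 t + 1) * Ifun a1 b1 c (fun x => V1 x + 1) n t)
          volume c y := by
        apply ContinuousOn.intervalIntegrable
        rw [uIcc_of_le hcy]
        exact (Real.continuous_exp.comp_continuousOn
          (B_contOn hcx0 hcy hy ha1 hb1 hb1B ha1invB).neg).mul in1.2.1
      have hint2 : IntervalIntegrable (fun r => sder a2 b2 c r *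
          ∫ t in c..r, mder a2 b2 c t * (V2 t + 1) * Ifun a2 b2 c (fun x => V2 x + 1) n t)
          volume c y := by
        apply ContinuousOn.intervalIntegrable
        rw [uIcc_of_le hcy]
        exact (Real.continuous_exp.comp_continuousOn
          (B_contOn hcx0 hcy hy ha2 hb2 hb2B ha2invB).neg).mul in2.2.1
      calc Ifun a1 b1 c (fun x => V1 x + 1) (n + 1) y * Real.exp (∫ t in c..y, b1 t / a1 t)
          = ∫ r in c..y, Real.exp (∫ t in c..y, b1 t / a1 t) * (sder a1 b1 c r *
              ∫ t in c..r, mder a1 b1 c t * (V1 t + 1) *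
                Ifun a1 b1 c (fun x => V1 x + 1) n t) := by
            rw [intervalIntegral.integral_const_mul, mul_comm]
            rfl
        _ ≤ ∫ r in c..y, Real.exp (∫ t in c..y, b2 t / a2 t) * (sder a2 b2 c r *
              ∫ t in c..r, mder a2 b2 c t * (V2 t + 1) *
                Ifun a2 b2 c (fun x => V2 x + 1) n t) :=
            intervalIntegral.integral_mono_on hcy (hint1.const_mul _) (hint2.const_mul _) key
        _ = Ifun a2 b2 c (fun x => V2 x + 1) (n + 1) y *
              Real.exp (∫ t in c..y, b2 t / a2 t) := by
            rw [intervalIntegral.integral_const_mul, mul_comm]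
            rfl
  have hTm : MeasurableSet {y : ℝ | c < y ∧ (y : EReal) < y0} := by
    have h : {y : ℝ | c < y ∧ (y : EReal) < y0}
        = Ioi c ∩ ((fun y : ℝ => (y : EReal)) ⁻¹' Iio y0) := rfl
    rw [h]
    exact measurableSet_Ioi.inter (measurable_coe_real_ereal measurableSet_Iio)
  have hsubT : {y : ℝ | c < y ∧ (y : EReal) < y0} ⊆ {x : ℝ | c ≤ x ∧ (x : EReal) < y0} :=
    fun x hx => ⟨hx.1.le, hx.2⟩
  have hsubE : {y : ℝ | c < y ∧ (y : EReal) < y0} ⊆ EI x0 y0 :=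
    fun x hx => ⟨lt_trans hcx0 (EReal.coe_lt_coe_iff.2 hx.1), hx.2⟩
  unfold noEntranceTop at h1 ⊢
  refine top_le_iff.1 (le_trans (le_of_eq h1.symm) ?_)
  apply lintegral_mono_ae
  filter_upwards [ae_restrict_of_ae_restrict_of_subset hsubT hcomp,
    ae_restrict_of_ae_restrict_of_subset hsubE ha1pos,
    ae_restrict_of_ae_restrict_of_subset hsubE ha2pos,
    ae_restrict_mem hTm] with y hcmp hp1 hp2 hyT
  have hcy : c ≤ y := le_of_lt hyT.1
  have hyy : (y : EReal) < y0 := hyT.2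
  have hterm : ∀ n : ℕ,
      Ifun a1 b1 c (fun x => V1 x + 1) n y * mder a1 b1 c y ≤
      Ifun a2 b2 c (fun x => V2 x + 1) n y * mder a2 b2 c y := by
    intro n
    have e1 : Ifun a1 b1 c (fun x => V1 x + 1) n y * mder a1 b1 c y
        = (1 / a1 y) * (Ifun a1 b1 c (fun x => V1 x + 1) n y *
            Real.exp (∫ t in c..y, b1 t / a1 t)) := by
      simp only [mder]; ring
    have e2 : Ifun a2 b2 c (fun x => V2 x + 1) n y * mder a2 b2 c y
        = (1 / a2 y) * (Ifun a2 b2 c (fun x => V2 x + 1) n y *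
            Real.exp (∫ t in c..y, b2 t / a2 t)) := by
      simp only [mder]; ring
    rw [e1, e2]
    exact mul_le_mul (one_div_le_one_div_of_le hp2 hcmp.1) (comp n y hcy hyy)
      (mul_nonneg ((reg1 n).2 y hcy hyy) (Real.exp_nonneg _))
      (le_of_lt (one_div_pos.2 hp2))
  calc (∑' n : ℕ, ENNReal.ofReal (Ifun a1 b1 c (fun x => V1 x + 1) n y)) *
        ENNReal.ofReal (mder a1 b1 c y)
      = ∑' n : ℕ, ENNReal.ofReal (Ifun a1 b1 c (fun x => V1 x + 1) n y * mder a1 b1 c y) := by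
        rw [← ENNReal.tsum_mul_right]
        exact tsum_congr fun n => (ENNReal.ofReal_mul ((reg1 n).2 y hcy hyy)).symm
    _ ≤ ∑' n : ℕ, ENNReal.ofReal (Ifun a2 b2 c (fun x => V2 x + 1) n y * mder a2 b2 c y) :=
        ENNReal.tsum_le_tsum fun n => ENNReal.ofReal_le_ofReal (hterm n)
    _ = (∑' n : ℕ, ENNReal.ofReal (Ifun a2 b2 c (fun x => V2 x + 1) n y)) *
        ENNReal.ofReal (mder a2 b2 c y) := by
        rw [← ENNReal.tsum_mul_right]
        exact tsum_congr fun n => ENNReal.ofReal_mul ((reg2 n).2 y hcy hyy)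
end
end

section
/- Comparison principle toward x0: let (a_k, b_k, V_k), k = 1,2, be two coefficient triples on (x0,y0) satisfying the standing assumptions, with associated s_k', m_k' and iterated integrals J_{n,k}^W (all based at c). Assume a_1(x) ≥ a_2(x), V_2(x) ≥ V_1(x), and b_1(x)/a_1(x) ≥ b_2(x)/a_2(x) for a.e. x ∈ (x0, c]. If ∫_{x0}^{c} (∑_{n≥0} J_{n,1}^{V_1+1}(y)) m_1'(y) dy = +∞, then ∫_{x0}^{c} (∑_{n≥0} J_{n,2}^{V_2+1}(y)) m_2'(y) dy = +∞; i.e. if x0 is no entrance boundary for L_1 = a_1 d²/dx² + b_1 d/dx − V_1, then it is no entrance boundary for L_2 = a_2 d²/dx² + b_2 d/dx − V_2. -/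
open MeasureTheory Set Filter

noncomputable section

section Aux

variable {x0 y0 : EReal} {a b V : ℝ → ℝ} {c : ℝ}

lemma IccSubEI {u v : ℝ} (hu : x0 < (u : EReal)) (hv : (v : EReal) < y0) :
    Icc u v ⊆ EI x0 y0 := fun x hx =>
  ⟨lt_of_lt_of_le hu (EReal.coe_le_coe_iff.2 hx.1),
   lt_of_le_of_lt (EReal.coe_le_coe_iff.2 hx.2) hv⟩

lemma myIntInt {f : ℝ → ℝ} {u v : ℝ} (huv : u ≤ v)
    (hm : AEStronglyMeasurable f (volume.restrict (Icc u v)))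
    {C : ℝ} (hC : ∀ᵐ x ∂(volume.restrict (Icc u v)), |f x| ≤ C) :
    IntervalIntegrable f volume u v := by
  rw [intervalIntegrable_iff_integrableOn_Ioc_of_le huv]
  have h1 : IntegrableOn f (Icc u v) volume := by
    refine Integrable.mono' (g := fun _ => C) (integrableOn_const measure_Icc_lt_top.ne) hm ?_
    exact hC.mono fun x h => by simpa [Real.norm_eq_abs] using h
  exact h1.mono_set Ioc_subset_Icc_self

lemma rhoInt (ha : Measurable a) (hb : Measurable b)
    (hbB : LocEssBdd x0 y0 b) (haiB : LocEssBdd x0 y0 (fun x => 1 / a x))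
    {p q : ℝ} (hp : x0 < (p : EReal)) (hq : (q : EReal) < y0) (hpq : p ≤ q) :
    IntervalIntegrable (fun t => b t / a t) volume p q := by
  obtain ⟨Cb, hCb⟩ := hbB p q hp hq
  obtain ⟨Ci, hCi⟩ := haiB p q hp hq
  refine myIntInt hpq ((hb.div ha).aestronglyMeasurable) (C := max Cb 0 * max Ci 0) ?_
  filter_upwards [hCb, hCi] with x h1 h2
  have he : b x / a x = b x * (1 / a x) := by ring
  rw [he, abs_mul]
  exact mul_le_mul (h1.trans (le_max_left _ _)) (h2.trans (le_max_left _ _))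
    (abs_nonneg _) (le_max_right Cb 0)

lemma FcontAux (ha : Measurable a) (hb : Measurable b)
    (hbB : LocEssBdd x0 y0 b) (haiB : LocEssBdd x0 y0 (fun x => 1 / a x))
    (hcy : (c : EReal) < y0) {u : ℝ} (hu : x0 < (u : EReal)) (huc : u ≤ c) :
    ContinuousOn (fun x => ∫ t in c..x, b t / a t) (Icc u c) := by
  have h := intervalIntegral.continuousOn_primitive_interval'
    (rhoInt ha hb hbB haiB hu hcy huc) (right_mem_uIcc (a := u) (b := c))
  rwa [uIcc_of_le huc] at h

lemma sderContAux (ha : Measurable a) (hb : Measurable b)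
    (hbB : LocEssBdd x0 y0 b) (haiB : LocEssBdd x0 y0 (fun x => 1 / a x))
    (hcy : (c : EReal) < y0) {u : ℝ} (hu : x0 < (u : EReal)) (huc : u ≤ c) :
    ContinuousOn (sder a b c) (Icc u c) :=
  Real.continuous_exp.comp_continuousOn (FcontAux ha hb hbB haiB hcy hu huc).neg

lemma expFContAux (ha : Measurable a) (hb : Measurable b)
    (hbB : LocEssBdd x0 y0 b) (haiB : LocEssBdd x0 y0 (fun x => 1 / a x))
    (hcy : (c : EReal) < y0) {u : ℝ} (hu : x0 < (u : EReal)) (huc : u ≤ c) :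
    ContinuousOn (fun x => Real.exp (∫ t in c..x, b t / a t)) (Icc u c) :=
  Real.continuous_exp.comp_continuousOn (FcontAux ha hb hbB haiB hcy hu huc)

lemma mderAESMAux (ha : Measurable a) (hb : Measurable b)
    (hbB : LocEssBdd x0 y0 b) (haiB : LocEssBdd x0 y0 (fun x => 1 / a x))
    (hcy : (c : EReal) < y0) {u : ℝ} (hu : x0 < (u : EReal)) (huc : u ≤ c) :
    AEStronglyMeasurable (mder a b c) (volume.restrict (Icc u c)) := by
  have h1 : Measurable fun x => 1 / a x := by exact ha.const_div 1
  exact h1.aestronglyMeasurable.mul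
    ((expFContAux ha hb hbB haiB hcy hu huc).aestronglyMeasurable measurableSet_Icc)

lemma mderBddAux (ha : Measurable a) (hb : Measurable b)
    (hbB : LocEssBdd x0 y0 b) (haiB : LocEssBdd x0 y0 (fun x => 1 / a x))
    (hcy : (c : EReal) < y0) {u : ℝ} (hu : x0 < (u : EReal)) (huc : u ≤ c) :
    ∃ C : ℝ, ∀ᵐ x ∂(volume.restrict (Icc u c)), |mder a b c x| ≤ C := by
  obtain ⟨Ci, hCi⟩ := haiB u c hu hcy
  obtain ⟨Ce, hCe⟩ := isCompact_Icc.exists_bound_of_continuousOn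
    (expFContAux ha hb hbB haiB hcy hu huc)
  refine ⟨max Ci 0 * max Ce 0, ?_⟩
  filter_upwards [hCi, ae_restrict_mem measurableSet_Icc] with x h1 h2
  have he : |mder a b c x| = |1 / a x| * |Real.exp (∫ t in c..x, b t / a t)| := by
    rw [mder, abs_mul]
  rw [he]
  refine mul_le_mul (h1.trans (le_max_left _ _)) ?_ (abs_nonneg _) (le_max_right Ci 0)
  have := hCe x h2
  rw [Real.norm_eq_abs] at this
  exact this.trans (le_max_left _ _)

lemma mderNonnegAux (hapos : ∀ᵐ x ∂(volume.restrict (EI x0 y0)), 0 < a x)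
    {u v : ℝ} (hu : x0 < (u : EReal)) (hv : (v : EReal) < y0) :
    ∀ᵐ x ∂(volume.restrict (Icc u v)), 0 ≤ mder a b c x := by
  filter_upwards [ae_restrict_of_ae_restrict_of_subset (IccSubEI hu hv) hapos] with x hx
  exact mul_nonneg (le_of_lt (div_pos one_pos hx)) (Real.exp_nonneg _)

end Aux
section Aux2

variable {x0 y0 : EReal} {a b V : ℝ → ℝ} {c : ℝ}

lemma innerFactsAux (ha : Measurable a) (hb : Measurable b) (hV : Measurable V)
    (hbB : LocEssBdd x0 y0 b) (hVB : LocEssBdd x0 y0 V)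
    (haiB : LocEssBdd x0 y0 (fun x => 1 / a x))
    (hcy : (c : EReal) < y0)
    (hapos : ∀ᵐ x ∂(volume.restrict (EI x0 y0)), 0 < a x)
    (hVnn : ∀ x ∈ EI x0 y0, 0 ≤ V x)
    (φ : ℝ → ℝ)
    (hφc : ∀ u : ℝ, x0 < (u : EReal) → u ≤ c → ContinuousOn φ (Icc u c))
    (hφn : ∀ t : ℝ, x0 < (t : EReal) → t ≤ c → 0 ≤ φ t) :
    (∀ u : ℝ, x0 < (u : EReal) → u ≤ c →
        IntegrableOn (fun t => mder a b c t * (V t + 1) * φ t) (Icc u c) volume)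
    ∧ (∀ u : ℝ, x0 < (u : EReal) → u ≤ c →
        ContinuousOn (fun r => ∫ t in r..c, mder a b c t * (V t + 1) * φ t) (Icc u c))
    ∧ (∀ r : ℝ, x0 < (r : EReal) → r ≤ c →
        0 ≤ ∫ t in r..c, mder a b c t * (V t + 1) * φ t) := by
  have hInt : ∀ u : ℝ, x0 < (u : EReal) → u ≤ c →
      IntegrableOn (fun t => mder a b c t * (V t + 1) * φ t) (Icc u c) volume := by
    intro u hu huc
    have haesm : AEStronglyMeasurable (fun t => mder a b c t * (V t + 1) * φ t)
        (volume.restrict (Icc u c)) :=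
      ((mderAESMAux ha hb hbB haiB hcy hu huc).mul
        ((hV.add_const 1).aestronglyMeasurable)).mul
        ((hφc u hu huc).aestronglyMeasurable measurableSet_Icc)
    obtain ⟨Cm, hCm⟩ := mderBddAux ha hb hbB haiB hcy hu huc
    obtain ⟨Cv, hCv⟩ := hVB u c hu hcy
    obtain ⟨Cp, hCp⟩ := isCompact_Icc.exists_bound_of_continuousOn (hφc u hu huc)
    refine Integrable.mono' (g := fun _ => max Cm 0 * (max Cv 0 + 1) * max Cp 0)
      (integrableOn_const measure_Icc_lt_top.ne) haesm ?_
    filter_upwards [hCm, hCv, ae_restrict_mem measurableSet_Icc] with t h1 h2 h3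
    rw [Real.norm_eq_abs, abs_mul, abs_mul]
    have hv1 : |V t + 1| ≤ max Cv 0 + 1 := by
      calc |V t + 1| ≤ |V t| + |(1:ℝ)| := abs_add_le _ _
        _ ≤ max Cv 0 + 1 := by
            rw [abs_one]
            exact add_le_add (h2.trans (le_max_left _ _)) le_rfl
    have hp1 : |φ t| ≤ max Cp 0 := by
      have := hCp t h3
      rw [Real.norm_eq_abs] at this
      exact this.trans (le_max_left _ _)
    refine mul_le_mul (mul_le_mul (h1.trans (le_max_left _ _)) hv1 (abs_nonneg _)
      (le_max_right Cm 0)) hp1 (abs_nonneg _) ?_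
    have h0 : (0:ℝ) ≤ max Cv 0 + 1 := by positivity
    exact mul_nonneg (le_max_right Cm 0) h0
  refine ⟨hInt, ?_, ?_⟩
  · intro u hu huc
    have h := intervalIntegral.continuousOn_primitive_interval_left
      (f := fun t => mder a b c t * (V t + 1) * φ t) (μ := volume) (a := u) (b := c)
      (by rw [uIcc_of_le huc]; exact hInt u hu huc)
    rwa [uIcc_of_le huc] at h
  · intro r hr hrc
    refine intervalIntegral.integral_nonneg_of_ae_restrict hrc ?_
    filter_upwards [mderNonnegAux hapos hr hcy, ae_restrict_mem measurableSet_Icc]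
      with t h1 h2
    have h3 : 0 ≤ V t + 1 := by
      have := hVnn t (IccSubEI hr hcy h2)
      linarith
    have h4 : 0 ≤ φ t :=
      hφn t (lt_of_lt_of_le hr (EReal.coe_le_coe_iff.2 h2.1)) h2.2
    exact mul_nonneg (mul_nonneg h1 h3) h4

lemma JfactsAux (ha : Measurable a) (hb : Measurable b) (hV : Measurable V)
    (hbB : LocEssBdd x0 y0 b) (hVB : LocEssBdd x0 y0 V)
    (haiB : LocEssBdd x0 y0 (fun x => 1 / a x))
    (hcy : (c : EReal) < y0)
    (hapos : ∀ᵐ x ∂(volume.restrict (EI x0 y0)), 0 < a x)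
    (hVnn : ∀ x ∈ EI x0 y0, 0 ≤ V x) :
    ∀ n : ℕ,
    (∀ u : ℝ, x0 < (u : EReal) → u ≤ c →
        ContinuousOn (Jfun a b c (fun x => V x + 1) n) (Icc u c))
    ∧ (∀ y : ℝ, x0 < (y : EReal) → y ≤ c → 0 ≤ Jfun a b c (fun x => V x + 1) n y) := by
  intro n
  induction n with
  | zero =>
    exact ⟨fun u _ _ => continuousOn_const, fun y _ _ => by simp [Jfun]⟩
  | succ n ih =>
    obtain ⟨ihc, ihn⟩ := ih
    obtain ⟨hInt, hIC, hINN⟩ := innerFactsAux ha hb hV hbB hVB haiB hcy hapos hVnn _ ihc ihn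
    have hJeq : Jfun a b c (fun x => V x + 1) (n + 1) = fun y =>
        ∫ r in y..c, sder a b c r *
          ∫ t in r..c, mder a b c t * (V t + 1) * Jfun a b c (fun x => V x + 1) n t := by
      funext y
      simp [Jfun]
    constructor
    · intro u hu huc
      have hh : ContinuousOn (fun r => sder a b c r *
          ∫ t in r..c, mder a b c t * (V t + 1) * Jfun a b c (fun x => V x + 1) n t)
          (Icc u c) := (sderContAux ha hb hbB haiB hcy hu huc).mul (hIC u hu huc)
      have h := intervalIntegral.continuousOn_primitive_interval_left
          (μ := volume) (a := u) (b := c)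
          (by rw [uIcc_of_le huc]; exact hh.integrableOn_Icc)
      rw [uIcc_of_le huc] at h
      rw [hJeq]
      exact h
    · intro y hy hyc
      rw [hJeq]
      refine intervalIntegral.integral_nonneg hyc fun r hr => ?_
      exact mul_nonneg (Real.exp_nonneg _)
        (hINN r (lt_of_lt_of_le hy (EReal.coe_le_coe_iff.2 hr.1)) hr.2)

end Aux2

/-- comparison principle toward `x0`: if `a1 ≥ a2`, `V2 ≥ V1` and
`b1/a1 ≥ b2/a2` a.e. on `(x0, c]`, and `x0` is no entrance boundary for
`L_1 = a1 d²/dx² + b1 d/dx - V1`, then it is no entrance boundary for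
`L_2 = a2 d²/dx² + b2 d/dx - V2`. -/
theorem stmt14
    (x0 y0 : EReal) (hxy : x0 < y0)
    (a1 b1 V1 a2 b2 V2 : ℝ → ℝ) (c : ℝ)
    (hc : x0 < (c : EReal) ∧ (c : EReal) < y0)
    (ha1 : Measurable a1) (hb1 : Measurable b1) (hV1 : Measurable V1)
    (ha2 : Measurable a2) (hb2 : Measurable b2) (hV2 : Measurable V2)
    (ha1B : LocEssBdd x0 y0 a1) (hb1B : LocEssBdd x0 y0 b1) (hV1B : LocEssBdd x0 y0 V1)
    (ha1invB : LocEssBdd x0 y0 (fun x => 1 / a1 x))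
    (ha2B : LocEssBdd x0 y0 a2) (hb2B : LocEssBdd x0 y0 b2) (hV2B : LocEssBdd x0 y0 V2)
    (ha2invB : LocEssBdd x0 y0 (fun x => 1 / a2 x))
    (ha1pos : ∀ᵐ x ∂(volume.restrict (EI x0 y0)), 0 < a1 x)
    (ha2pos : ∀ᵐ x ∂(volume.restrict (EI x0 y0)), 0 < a2 x)
    (hV1nn : ∀ x ∈ EI x0 y0, 0 ≤ V1 x)
    (hV2nn : ∀ x ∈ EI x0 y0, 0 ≤ V2 x)
    (hcomp : ∀ᵐ x ∂(volume.restrict {x : ℝ | x0 < (x : EReal) ∧ x ≤ c}),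
      a2 x ≤ a1 x ∧ V1 x ≤ V2 x ∧ b2 x / a2 x ≤ b1 x / a1 x)
    (h1 : noEntranceBot x0 a1 b1 c (fun x => V1 x + 1)) :
    noEntranceBot x0 a2 b2 c (fun x => V2 x + 1) := by
  obtain ⟨hc0, hcy⟩ := hc
  set S : Set ℝ := {x : ℝ | x0 < (x : EReal) ∧ x ≤ c} with hSdef
  have hSm : MeasurableSet S := by
    have h01 : S = ((↑) : ℝ → EReal) ⁻¹' (Ioi x0) ∩ Iic c := by
      ext x; simp [hSdef, Set.mem_Iic, Set.mem_Ioi, and_comm]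
    rw [h01]
    exact ((continuous_coe_real_ereal.measurable measurableSet_Ioi).inter measurableSet_Iic)
  have hSsubEI : S ⊆ EI x0 y0 := fun x hx =>
    ⟨hx.1, lt_of_le_of_lt (EReal.coe_le_coe_iff.2 hx.2) hcy⟩
  have hIccS : ∀ {p q : ℝ}, x0 < (p : EReal) → q ≤ c → Icc p q ⊆ S := by
    intro p q hp hq x hx
    exact ⟨lt_of_lt_of_le hp (EReal.coe_le_coe_iff.2 hx.1), hx.2.trans hq⟩
  have h1posS : ∀ᵐ x ∂(volume.restrict S), 0 < a1 x :=
    ae_restrict_of_ae_restrict_of_subset hSsubEI ha1pos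
  have h2posS : ∀ᵐ x ∂(volume.restrict S), 0 < a2 x :=
    ae_restrict_of_ae_restrict_of_subset hSsubEI ha2pos
  -- kernel comparison
  have hker : ∀ᵐ y ∂(volume.restrict S), ∀ r ∈ Icc y c,
      mder a1 b1 c y * sder a1 b1 c r ≤ mder a2 b2 c y * sder a2 b2 c r := by
    filter_upwards [hcomp, h1posS, h2posS, ae_restrict_mem hSm] with y hy h1p h2p hyS
    intro r hr
    have hy0 : x0 < (y : EReal) := hyS.1
    have hyr : y ≤ r := hr.1
    have hrc : r ≤ c := hr.2
    have hr0 : x0 < (r : EReal) := lt_of_lt_of_le hy0 (EReal.coe_le_coe_iff.2 hyr)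
    have hry0 : (r : EReal) < y0 := lt_of_le_of_lt (EReal.coe_le_coe_iff.2 hrc) hcy
    have hi1yr := rhoInt ha1 hb1 hb1B ha1invB hy0 hry0 hyr
    have hi2yr := rhoInt ha2 hb2 hb2B ha2invB hy0 hry0 hyr
    have hi1yc := rhoInt ha1 hb1 hb1B ha1invB hy0 hcy hyS.2
    have hi2yc := rhoInt ha2 hb2 hb2B ha2invB hy0 hcy hyS.2
    have hi1rc := rhoInt ha1 hb1 hb1B ha1invB hr0 hcy hrc
    have hi2rc := rhoInt ha2 hb2 hb2B ha2invB hr0 hcy hrc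
    have hrw : ∀ (aa bb : ℝ → ℝ),
        IntervalIntegrable (fun t => bb t / aa t) volume y c →
        IntervalIntegrable (fun t => bb t / aa t) volume r c →
        mder aa bb c y * sder aa bb c r
          = (1 / aa y) * Real.exp (-(∫ t in y..r, bb t / aa t)) := by
      intro aa bb hyc' hrc'
      rw [mder, sder, mul_assoc, ← Real.exp_add]
      congr 2
      have h := intervalIntegral.integral_interval_sub_left hyc'.symm hrc'.symm
      have h2 : (∫ t in r..y, bb t / aa t) = -(∫ t in y..r, bb t / aa t) :=
        intervalIntegral.integral_symm y r
      rw [h2] at h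
      linarith
    rw [hrw a1 b1 hi1yc hi1rc, hrw a2 b2 hi2yc hi2rc]
    have hII : (∫ t in y..r, b2 t / a2 t) ≤ ∫ t in y..r, b1 t / a1 t := by
      refine intervalIntegral.integral_mono_ae_restrict hyr hi2yr hi1yr ?_
      filter_upwards [ae_restrict_of_ae_restrict_of_subset (hIccS hy0 hrc) hcomp]
        with t ht using ht.2.2
    refine mul_le_mul ?_ (Real.exp_le_exp.2 (neg_le_neg hII)) (Real.exp_nonneg _) ?_
    · exact one_div_le_one_div_of_le h2p hy.1
    · exact le_of_lt (div_pos one_pos h2p)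
  have hJ1 := JfactsAux (c := c) ha1 hb1 hV1 hb1B hV1B ha1invB hcy ha1pos hV1nn
  have hJ2 := JfactsAux (c := c) ha2 hb2 hV2 hb2B hV2B ha2invB hcy ha2pos hV2nn
  -- main comparison
  have hmain : ∀ n : ℕ, ∀ᵐ y ∂(volume.restrict S),
      mder a1 b1 c y * Jfun a1 b1 c (fun x => V1 x + 1) n y
        ≤ mder a2 b2 c y * Jfun a2 b2 c (fun x => V2 x + 1) n y := by
    intro n
    induction n with
    | zero =>
      filter_upwards [hker, ae_restrict_mem hSm] with y hk hyS
      have h := hk c ⟨hyS.2, le_rfl⟩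
      simpa [Jfun, sder, intervalIntegral.integral_same] using h
    | succ n ihn =>
      obtain ⟨hInt1, hIC1, hINN1⟩ :=
        innerFactsAux ha1 hb1 hV1 hb1B hV1B ha1invB hcy ha1pos hV1nn _ (hJ1 n).1 (hJ1 n).2
      obtain ⟨hInt2, hIC2, hINN2⟩ :=
        innerFactsAux ha2 hb2 hV2 hb2B hV2B ha2invB hcy ha2pos hV2nn _ (hJ2 n).1 (hJ2 n).2
      filter_upwards [hker, ae_restrict_mem hSm, h2posS] with y hk hyS h2p
      have hy0 : x0 < (y : EReal) := hyS.1
      have hyc : y ≤ c := hyS.2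
      have hInle : ∀ r ∈ Icc y c,
          (∫ t in r..c, mder a1 b1 c t * (V1 t + 1) * Jfun a1 b1 c (fun x => V1 x + 1) n t)
            ≤ ∫ t in r..c, mder a2 b2 c t * (V2 t + 1) * Jfun a2 b2 c (fun x => V2 x + 1) n t := by
        intro r hr
        have hr0 : x0 < (r : EReal) := lt_of_lt_of_le hy0 (EReal.coe_le_coe_iff.2 hr.1)
        have hrc : r ≤ c := hr.2
        have hi1 : IntervalIntegrable
            (fun t => mder a1 b1 c t * (V1 t + 1) * Jfun a1 b1 c (fun x => V1 x + 1) n t)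
            volume r c := by
          rw [intervalIntegrable_iff_integrableOn_Ioc_of_le hrc]
          exact (hInt1 r hr0 hrc).mono_set Ioc_subset_Icc_self
        have hi2 : IntervalIntegrable
            (fun t => mder a2 b2 c t * (V2 t + 1) * Jfun a2 b2 c (fun x => V2 x + 1) n t)
            volume r c := by
          rw [intervalIntegrable_iff_integrableOn_Ioc_of_le hrc]
          exact (hInt2 r hr0 hrc).mono_set Ioc_subset_Icc_self
        refine intervalIntegral.integral_mono_ae_restrict hrc hi1 hi2 ?_
        filter_upwards [ae_restrict_of_ae_restrict_of_subset (hIccS hr0 le_rfl) ihn,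
          ae_restrict_of_ae_restrict_of_subset (hIccS hr0 le_rfl) hcomp,
          mderNonnegAux ha2pos hr0 hcy,
          ae_restrict_mem measurableSet_Icc] with t hIH hcmp hm2 htIcc
        have ht0 : x0 < (t : EReal) := lt_of_lt_of_le hr0 (EReal.coe_le_coe_iff.2 htIcc.1)
        have hJ2nn := (hJ2 n).2 t ht0 htIcc.2
        have hW1 : 0 ≤ V1 t + 1 := by
          have := hV1nn t (IccSubEI hr0 hcy htIcc)
          linarith
        have hW12 : V1 t + 1 ≤ V2 t + 1 := by linarith [hcmp.2.1]
        calc mder a1 b1 c t * (V1 t + 1) * Jfun a1 b1 c (fun x => V1 x + 1) n t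
            = (V1 t + 1) * (mder a1 b1 c t * Jfun a1 b1 c (fun x => V1 x + 1) n t) := by ring
          _ ≤ (V1 t + 1) * (mder a2 b2 c t * Jfun a2 b2 c (fun x => V2 x + 1) n t) :=
              mul_le_mul_of_nonneg_left hIH hW1
          _ ≤ (V2 t + 1) * (mder a2 b2 c t * Jfun a2 b2 c (fun x => V2 x + 1) n t) :=
              mul_le_mul_of_nonneg_right hW12 (mul_nonneg hm2 hJ2nn)
          _ = mder a2 b2 c t * (V2 t + 1) * Jfun a2 b2 c (fun x => V2 x + 1) n t := by ring
      have hii1 : IntervalIntegrable (fun r => mder a1 b1 c y * (sder a1 b1 c r *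
          ∫ t in r..c, mder a1 b1 c t * (V1 t + 1) * Jfun a1 b1 c (fun x => V1 x + 1) n t))
          volume y c := by
        apply ContinuousOn.intervalIntegrable
        rw [uIcc_of_le hyc]
        exact continuousOn_const.mul
          ((sderContAux ha1 hb1 hb1B ha1invB hcy hy0 hyc).mul (hIC1 y hy0 hyc))
      have hii2 : IntervalIntegrable (fun r => mder a2 b2 c y * (sder a2 b2 c r *
          ∫ t in r..c, mder a2 b2 c t * (V2 t + 1) * Jfun a2 b2 c (fun x => V2 x + 1) n t))
          volume y c := by
        apply ContinuousOn.intervalIntegrable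
        rw [uIcc_of_le hyc]
        exact continuousOn_const.mul
          ((sderContAux ha2 hb2 hb2B ha2invB hcy hy0 hyc).mul (hIC2 y hy0 hyc))
      have key : (∫ r in y..c, mder a1 b1 c y * (sder a1 b1 c r *
            ∫ t in r..c, mder a1 b1 c t * (V1 t + 1) * Jfun a1 b1 c (fun x => V1 x + 1) n t))
          ≤ ∫ r in y..c, mder a2 b2 c y * (sder a2 b2 c r *
            ∫ t in r..c, mder a2 b2 c t * (V2 t + 1) * Jfun a2 b2 c (fun x => V2 x + 1) n t) := by
        refine intervalIntegral.integral_mono_on hyc hii1 hii2 ?_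
        intro r hr
        have hK := hk r hr
        have hIle := hInle r hr
        have hInn1 := hINN1 r (lt_of_lt_of_le hy0 (EReal.coe_le_coe_iff.2 hr.1)) hr.2
        have hK2 : 0 ≤ mder a2 b2 c y * sder a2 b2 c r := by
          unfold mder sder
          positivity
        rw [← mul_assoc, ← mul_assoc]
        exact mul_le_mul hK hIle hInn1 hK2
      calc mder a1 b1 c y * Jfun a1 b1 c (fun x => V1 x + 1) (n + 1) y
          = ∫ r in y..c, mder a1 b1 c y * (sder a1 b1 c r *
              ∫ t in r..c, mder a1 b1 c t * (V1 t + 1) * Jfun a1 b1 c (fun x => V1 x + 1) n t) := by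
            rw [show Jfun a1 b1 c (fun x => V1 x + 1) (n + 1) y
                = ∫ r in y..c, sder a1 b1 c r *
                  ∫ t in r..c, mder a1 b1 c t * (V1 t + 1) * Jfun a1 b1 c (fun x => V1 x + 1) n t
              from rfl]
            exact (intervalIntegral.integral_const_mul _ _).symm
        _ ≤ ∫ r in y..c, mder a2 b2 c y * (sder a2 b2 c r *
              ∫ t in r..c, mder a2 b2 c t * (V2 t + 1) * Jfun a2 b2 c (fun x => V2 x + 1) n t) := key
        _ = mder a2 b2 c y * Jfun a2 b2 c (fun x => V2 x + 1) (n + 1) y := by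
            rw [intervalIntegral.integral_const_mul]
            rfl
  -- conclusion
  set T : Set ℝ := {y : ℝ | x0 < (y : EReal) ∧ y < c} with hTdef
  have hTsub : T ⊆ S := fun x hx => ⟨hx.1, le_of_lt hx.2⟩
  have hTm : MeasurableSet T := by
    have h01 : T = ((↑) : ℝ → EReal) ⁻¹' (Ioi x0) ∩ Iio c := by
      ext x; simp [hTdef, Set.mem_Iio, Set.mem_Ioi, and_comm]
    rw [h01]
    exact ((continuous_coe_real_ereal.measurable measurableSet_Ioi).inter measurableSet_Iio)
  unfold noEntranceBot at h1 ⊢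
  have hmono : (∫⁻ y in T, (∑' n : ℕ, ENNReal.ofReal (Jfun a1 b1 c (fun x => V1 x + 1) n y)) *
        ENNReal.ofReal (mder a1 b1 c y))
      ≤ ∫⁻ y in T, (∑' n : ℕ, ENNReal.ofReal (Jfun a2 b2 c (fun x => V2 x + 1) n y)) *
        ENNReal.ofReal (mder a2 b2 c y) := by
    refine lintegral_mono_ae ?_
    have hall : ∀ᵐ y ∂(volume.restrict T), ∀ n : ℕ,
        mder a1 b1 c y * Jfun a1 b1 c (fun x => V1 x + 1) n y
          ≤ mder a2 b2 c y * Jfun a2 b2 c (fun x => V2 x + 1) n y := by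
      rw [ae_all_iff]
      exact fun n => ae_restrict_of_ae_restrict_of_subset hTsub (hmain n)
    filter_upwards [hall, ae_restrict_mem hTm] with y hy hyT
    have hy0 : x0 < (y : EReal) := hyT.1
    have hyc : y ≤ c := le_of_lt hyT.2
    rw [← ENNReal.tsum_mul_right, ← ENNReal.tsum_mul_right]
    refine ENNReal.tsum_le_tsum fun n => ?_
    rw [← ENNReal.ofReal_mul ((hJ1 n).2 y hy0 hyc), ← ENNReal.ofReal_mul ((hJ2 n).2 y hy0 hyc)]
    refine ENNReal.ofReal_le_ofReal ?_
    rw [mul_comm, mul_comm (Jfun a2 b2 c (fun x => V2 x + 1) n y)]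
    exact hy n
  exact top_le_iff.mp (h1 ▸ hmono)
end
end

section
/- Termwise comparison inequality: let (a_k, b_k, V_k), k = 1,2, be two coefficient triples on (x0,y0) satisfying the standing assumptions with a_1(x) ≥ a_2(x), V_2(x) ≥ V_1(x), and b_1(x)/a_1(x) ≤ b_2(x)/a_2(x) for a.e. x ∈ [c, y0). Then for every n ≥ 0, B_{n,1} ≤ B_{n,2}, where B_{n,k} := ∫_c^{y0} m_k'(y) I_{n,k}^{V_k+1}(y) dy and I_{n,k}^{V_k+1} are the iterated integrals with potential V_k + 1 built from s_k', m_k' based at c. -/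
open MeasureTheory Set Filter

noncomputable section

namespace Stmt15Aux

variable {x0 y0 : EReal} {a b V : ℝ → ℝ} {c : ℝ}

lemma Icc_sub_EI (hc : x0 < (c : EReal)) {y : ℝ} (hy : (y : EReal) < y0) :
    Icc c y ⊆ EI x0 y0 := fun t ht =>
  ⟨lt_of_lt_of_le hc (by exact_mod_cast ht.1), lt_of_le_of_lt (by exact_mod_cast ht.2) hy⟩

lemma Icc_sub_T (hc : x0 < (c : EReal)) {u v : ℝ} (hcu : c ≤ u) (hv : (v : EReal) < y0) :
    Icc u v ⊆ {x : ℝ | c ≤ x ∧ (x : EReal) < y0} := fun t ht =>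
  ⟨hcu.trans ht.1, lt_of_le_of_lt (by exact_mod_cast ht.2) hv⟩

lemma K_intOn (ha : Measurable a) (hb : Measurable b)
    (hbB : LocEssBdd x0 y0 b) (hainvB : LocEssBdd x0 y0 (fun x => 1 / a x))
    (hc : x0 < (c : EReal)) {y : ℝ} (hy : (y : EReal) < y0) :
    IntegrableOn (fun t => b t / a t) (Icc c y) := by
  obtain ⟨C1, hC1⟩ := hbB c y hc hy
  obtain ⟨C2, hC2⟩ := hainvB c y hc hy
  refine Integrable.mono' (integrable_const (C1 * C2)) (hb.div ha).aestronglyMeasurable ?_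
  filter_upwards [hC1, hC2] with t h1 h2
  have e : b t / a t = b t * (1 / a t) := by ring
  rw [Real.norm_eq_abs, e, abs_mul]
  exact mul_le_mul h1 h2 (abs_nonneg _) ((abs_nonneg _).trans h1)

lemma K_ii (ha : Measurable a) (hb : Measurable b)
    (hbB : LocEssBdd x0 y0 b) (hainvB : LocEssBdd x0 y0 (fun x => 1 / a x))
    (hc : x0 < (c : EReal)) {u v : ℝ} (hcu : c ≤ u) (huv : u ≤ v) (hv : (v : EReal) < y0) :
    IntervalIntegrable (fun t => b t / a t) volume u v := by
  have h := (K_intOn ha hb hbB hainvB hc hv).mono_set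
      (show uIcc u v ⊆ Icc c v by rw [uIcc_of_le huv]; exact Icc_subset_Icc hcu le_rfl)
  exact h.intervalIntegrable

lemma P_contOn (ha : Measurable a) (hb : Measurable b)
    (hbB : LocEssBdd x0 y0 b) (hainvB : LocEssBdd x0 y0 (fun x => 1 / a x))
    (hc : x0 < (c : EReal)) {y : ℝ} (hcy : c ≤ y) (hy : (y : EReal) < y0) :
    ContinuousOn (fun t => ∫ s in c..t, b s / a s) (Icc c y) := by
  have h := intervalIntegral.continuousOn_primitive_interval
    (f := fun t => b t / a t) (a := c) (b := y) (μ := volume) ?_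
  · rwa [uIcc_of_le hcy] at h
  · rw [uIcc_of_le hcy]; exact K_intOn ha hb hbB hainvB hc hy

/-- Integrability of `mder * (V+1) * h` on `Icc c y` for `h` continuous on that interval. -/
lemma intOn_of_contOn (ha : Measurable a) (hb : Measurable b) (hV : Measurable V)
    (hbB : LocEssBdd x0 y0 b) (hainvB : LocEssBdd x0 y0 (fun x => 1 / a x))
    (hVB : LocEssBdd x0 y0 V)
    (hc : x0 < (c : EReal)) {y : ℝ} (hcy : c ≤ y) (hy : (y : EReal) < y0)
    {h : ℝ → ℝ} (hh : ContinuousOn h (Icc c y)) :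
    IntegrableOn (fun t => mder a b c t * (V t + 1) * h t) (Icc c y) := by
  have hP := P_contOn ha hb hbB hainvB hc hcy hy
  have hexp : ContinuousOn (fun t => Real.exp (∫ s in c..t, b s / a s)) (Icc c y) :=
    Real.continuous_exp.comp_continuousOn hP
  obtain ⟨C1, hC1⟩ := hainvB c y hc hy
  obtain ⟨CV, hCV⟩ := hVB c y hc hy
  obtain ⟨C2, hC2⟩ := isCompact_Icc.exists_bound_of_continuousOn hexp
  obtain ⟨C3, hC3⟩ := isCompact_Icc.exists_bound_of_continuousOn hh
  have hmes : AEStronglyMeasurable (fun t => mder a b c t * (V t + 1) * h t)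
      (volume.restrict (Icc c y)) := by
    have h1 : AEStronglyMeasurable (fun t => 1 / a t) (volume.restrict (Icc c y)) :=
      (measurable_const.div ha).aestronglyMeasurable
    have h2 := hexp.aestronglyMeasurable (μ := volume) measurableSet_Icc
    have h3 : AEStronglyMeasurable (fun t => V t + 1) (volume.restrict (Icc c y)) :=
      (hV.add measurable_const).aestronglyMeasurable
    have h4 := hh.aestronglyMeasurable (μ := volume) measurableSet_Icc
    exact ((h1.mul h2).mul h3).mul h4
  refine Integrable.mono' (integrable_const (C1 * C2 * (CV + 1) * C3)) hmes ?_
  filter_upwards [hC1, hCV, ae_restrict_mem measurableSet_Icc] with t h1 h4 ht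
  have hC1nn : (0:ℝ) ≤ C1 := (abs_nonneg _).trans h1
  have hC2nn : (0:ℝ) ≤ C2 := (norm_nonneg _).trans (hC2 t ht)
  have hCVnn : (0:ℝ) ≤ CV := (abs_nonneg _).trans h4
  have e : ‖mder a b c t * (V t + 1) * h t‖
      = |1 / a t| * |Real.exp (∫ s in c..t, b s / a s)| * |V t + 1| * |h t| := by
    simp only [mder, Real.norm_eq_abs, abs_mul]
  rw [e]
  have e1 : |1 / a t| * |Real.exp (∫ s in c..t, b s / a s)| ≤ C1 * C2 :=
    mul_le_mul h1 (by simpa [Real.norm_eq_abs] using hC2 t ht) (abs_nonneg _) hC1nn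
  have e2 : |V t + 1| ≤ CV + 1 := (abs_add_le _ _).trans (by simpa using add_le_add_right h4 1)
  have e3 : |h t| ≤ C3 := by simpa [Real.norm_eq_abs] using hC3 t ht
  have e12 : |1 / a t| * |Real.exp (∫ s in c..t, b s / a s)| * |V t + 1| ≤ C1 * C2 * (CV + 1) :=
    mul_le_mul e1 e2 (abs_nonneg _) (mul_nonneg hC1nn hC2nn)
  exact mul_le_mul e12 e3 (abs_nonneg _)
    (mul_nonneg (mul_nonneg hC1nn hC2nn) (by linarith))

/-- Nonnegativity of the inner integral. -/
lemma inner_nonneg (hapos : ∀ᵐ x ∂(volume.restrict (EI x0 y0)), 0 < a x)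
    (hVnn : ∀ x ∈ EI x0 y0, 0 ≤ V x)
    (hc : x0 < (c : EReal)) {y : ℝ} (hy : (y : EReal) < y0)
    {I : ℝ → ℝ} (hI : ∀ t ∈ Icc c y, 0 ≤ I t) {r : ℝ} (hr : r ∈ Icc c y) :
    0 ≤ ∫ t in c..r, mder a b c t * (V t + 1) * I t := by
  apply intervalIntegral.integral_nonneg_of_ae_restrict hr.1
  have hsub : Icc c r ⊆ EI x0 y0 := (Icc_subset_Icc le_rfl hr.2).trans (Icc_sub_EI hc hy)
  have hpos : ∀ᵐ t ∂(volume.restrict (Icc c r)), 0 < a t :=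
    ae_restrict_of_ae_restrict_of_subset hsub hapos
  filter_upwards [hpos, ae_restrict_mem measurableSet_Icc] with t hat ht
  have h1 : 0 ≤ mder a b c t := mul_nonneg (by positivity) (Real.exp_nonneg _)
  have h2 : 0 ≤ V t + 1 := by have := hVnn t (hsub ht); linarith
  have h3 : 0 ≤ I t := hI t ⟨ht.1, ht.2.trans hr.2⟩
  positivity

/-- Main per-coefficient-triple bundle: continuity, nonnegativity, integrability. -/
lemma bundle (ha : Measurable a) (hb : Measurable b) (hV : Measurable V)
    (hbB : LocEssBdd x0 y0 b) (hainvB : LocEssBdd x0 y0 (fun x => 1 / a x))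
    (hVB : LocEssBdd x0 y0 V)
    (hapos : ∀ᵐ x ∂(volume.restrict (EI x0 y0)), 0 < a x)
    (hVnn : ∀ x ∈ EI x0 y0, 0 ≤ V x)
    (hc : x0 < (c : EReal)) (n : ℕ) :
    ∀ y : ℝ, c ≤ y → (y : EReal) < y0 →
      ContinuousOn (Ifun a b c (fun x => V x + 1) n) (Icc c y) ∧
      (∀ t ∈ Icc c y, 0 ≤ Ifun a b c (fun x => V x + 1) n t) ∧
      IntegrableOn
        (fun t => mder a b c t * (V t + 1) * Ifun a b c (fun x => V x + 1) n t) (Icc c y) ∧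
      ContinuousOn
        (fun r => ∫ t in c..r, mder a b c t * (V t + 1) * Ifun a b c (fun x => V x + 1) n t)
        (Icc c y) := by
  induction n with
  | zero =>
    intro y hcy hy
    have hcont : ContinuousOn (Ifun a b c (fun x => V x + 1) 0) (Icc c y) := by
      simp only [Ifun]; exact continuousOn_const
    have hint : IntegrableOn
        (fun t => mder a b c t * (V t + 1) * Ifun a b c (fun x => V x + 1) 0 t) (Icc c y) :=
      intOn_of_contOn ha hb hV hbB hainvB hVB hc hcy hy hcont
    refine ⟨hcont, fun t _ => by simp [Ifun], hint, ?_⟩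
    have h := intervalIntegral.continuousOn_primitive_interval (μ := volume)
      (a := c) (b := y)
      (f := fun t => mder a b c t * (V t + 1) * Ifun a b c (fun x => V x + 1) 0 t)
      (by rwa [uIcc_of_le hcy])
    rwa [uIcc_of_le hcy] at h
  | succ n IH =>
    intro y hcy hy
    obtain ⟨hIc, hInn, hIint, hinnerC⟩ := IH y hcy hy
    have hP := P_contOn ha hb hbB hainvB hc hcy hy
    have hsder : ContinuousOn (sder a b c) (Icc c y) :=
      Real.continuous_exp.comp_continuousOn hP.neg
    have hprod : ContinuousOn
        (fun r => sder a b c r *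
          ∫ t in c..r, mder a b c t * (V t + 1) * Ifun a b c (fun x => V x + 1) n t)
        (Icc c y) := hsder.mul hinnerC
    have hprodInt : IntegrableOn
        (fun r => sder a b c r *
          ∫ t in c..r, mder a b c t * (V t + 1) * Ifun a b c (fun x => V x + 1) n t)
        (Icc c y) := hprod.integrableOn_compact isCompact_Icc
    have hcont : ContinuousOn (Ifun a b c (fun x => V x + 1) (n + 1)) (Icc c y) := by
      have h := intervalIntegral.continuousOn_primitive_interval (μ := volume)
        (a := c) (b := y) (by rwa [uIcc_of_le hcy] : IntegrableOn _ (uIcc c y) volume)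
      rw [uIcc_of_le hcy] at h
      exact h.congr fun t _ => rfl
    have hnn : ∀ t ∈ Icc c y, 0 ≤ Ifun a b c (fun x => V x + 1) (n + 1) t := by
      intro t ht
      show (0:ℝ) ≤ ∫ r in c..t, sder a b c r *
        ∫ s in c..r, mder a b c s * (V s + 1) * Ifun a b c (fun x => V x + 1) n s
      apply intervalIntegral.integral_nonneg ht.1
      intro r hr
      have hr' : r ∈ Icc c y := ⟨hr.1, hr.2.trans ht.2⟩
      exact mul_nonneg (Real.exp_nonneg _) (inner_nonneg hapos hVnn hc hy hInn hr')
    have hint : IntegrableOn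
        (fun t => mder a b c t * (V t + 1) * Ifun a b c (fun x => V x + 1) (n + 1) t)
        (Icc c y) := intOn_of_contOn ha hb hV hbB hainvB hVB hc hcy hy hcont
    refine ⟨hcont, hnn, hint, ?_⟩
    have h := intervalIntegral.continuousOn_primitive_interval (μ := volume)
      (a := c) (b := y) (by rwa [uIcc_of_le hcy] : IntegrableOn _ (uIcc c y) volume)
    rwa [uIcc_of_le hcy] at h

variable {a1 b1 V1 a2 b2 V2 : ℝ → ℝ}

lemma P_comp (ha1 : Measurable a1) (hb1 : Measurable b1)
    (ha2 : Measurable a2) (hb2 : Measurable b2)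
    (hb1B : LocEssBdd x0 y0 b1) (ha1invB : LocEssBdd x0 y0 (fun x => 1 / a1 x))
    (hb2B : LocEssBdd x0 y0 b2) (ha2invB : LocEssBdd x0 y0 (fun x => 1 / a2 x))
    (hc : x0 < (c : EReal))
    (hcomp : ∀ᵐ x ∂(volume.restrict {x : ℝ | c ≤ x ∧ (x : EReal) < y0}),
      a2 x ≤ a1 x ∧ V1 x ≤ V2 x ∧ b1 x / a1 x ≤ b2 x / a2 x)
    {u v : ℝ} (hcu : c ≤ u) (huv : u ≤ v) (hv : (v : EReal) < y0) :
    (∫ t in u..v, b1 t / a1 t) ≤ ∫ t in u..v, b2 t / a2 t := by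
  refine intervalIntegral.integral_mono_ae_restrict huv
    (K_ii ha1 hb1 hb1B ha1invB hc hcu huv hv)
    (K_ii ha2 hb2 hb2B ha2invB hc hcu huv hv) ?_
  filter_upwards [ae_restrict_of_ae_restrict_of_subset (Icc_sub_T hc hcu hv) hcomp] with t ht
  exact ht.2.2

lemma comp_ae (hc : x0 < (c : EReal))
    (ha1 : Measurable a1) (hb1 : Measurable b1) (hV1 : Measurable V1)
    (ha2 : Measurable a2) (hb2 : Measurable b2) (hV2 : Measurable V2)
    (hb1B : LocEssBdd x0 y0 b1) (hV1B : LocEssBdd x0 y0 V1)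
    (ha1invB : LocEssBdd x0 y0 (fun x => 1 / a1 x))
    (hb2B : LocEssBdd x0 y0 b2) (hV2B : LocEssBdd x0 y0 V2)
    (ha2invB : LocEssBdd x0 y0 (fun x => 1 / a2 x))
    (ha1pos : ∀ᵐ x ∂(volume.restrict (EI x0 y0)), 0 < a1 x)
    (ha2pos : ∀ᵐ x ∂(volume.restrict (EI x0 y0)), 0 < a2 x)
    (hV1nn : ∀ x ∈ EI x0 y0, 0 ≤ V1 x)
    (hV2nn : ∀ x ∈ EI x0 y0, 0 ≤ V2 x)
    (hcomp : ∀ᵐ x ∂(volume.restrict {x : ℝ | c ≤ x ∧ (x : EReal) < y0}),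
      a2 x ≤ a1 x ∧ V1 x ≤ V2 x ∧ b1 x / a1 x ≤ b2 x / a2 x) (n : ℕ) :
    ∀ᵐ y ∂(volume.restrict {x : ℝ | c ≤ x ∧ (x : EReal) < y0}),
      mder a1 b1 c y * Ifun a1 b1 c (fun x => V1 x + 1) n y ≤
      mder a2 b2 c y * Ifun a2 b2 c (fun x => V2 x + 1) n y := by
  have hT : MeasurableSet {x : ℝ | c ≤ x ∧ (x : EReal) < y0} := by
    have h1 : MeasurableSet {x : ℝ | c ≤ x} := measurableSet_Ici
    have h2 : MeasurableSet {x : ℝ | (x : EReal) < y0} :=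
      measurableSet_lt measurable_coe_real_ereal measurable_const
    exact h1.inter h2
  have hTsub : {x : ℝ | c ≤ x ∧ (x : EReal) < y0} ⊆ EI x0 y0 := fun t ht =>
    ⟨lt_of_lt_of_le hc (by exact_mod_cast ht.1), ht.2⟩
  induction n with
  | zero =>
    filter_upwards [hcomp, ae_restrict_of_ae_restrict_of_subset hTsub ha1pos,
      ae_restrict_of_ae_restrict_of_subset hTsub ha2pos, ae_restrict_mem hT]
      with y hcy h1pos h2pos hyT
    simp only [Ifun, mul_one, mder]
    have hinv : 1 / a1 y ≤ 1 / a2 y := one_div_le_one_div_of_le h2pos hcy.1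
    have hPle := P_comp ha1 hb1 ha2 hb2 hb1B ha1invB hb2B ha2invB hc hcomp
      le_rfl hyT.1 hyT.2
    exact mul_le_mul hinv (Real.exp_le_exp.2 hPle) (Real.exp_nonneg _)
      (le_of_lt (one_div_pos.2 h2pos))
  | succ n IH =>
    filter_upwards [hcomp, ae_restrict_of_ae_restrict_of_subset hTsub ha1pos,
      ae_restrict_of_ae_restrict_of_subset hTsub ha2pos, ae_restrict_mem hT]
      with y hcy h1pos h2pos hyT
    obtain ⟨hcyT, hyy0⟩ := hyT
    obtain ⟨B1c, B1nn, B1int, B1innerC⟩ :=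
      bundle ha1 hb1 hV1 hb1B ha1invB hV1B ha1pos hV1nn hc n y hcyT hyy0
    obtain ⟨B2c, B2nn, B2int, B2innerC⟩ :=
      bundle ha2 hb2 hV2 hb2B ha2invB hV2B ha2pos hV2nn hc n y hcyT hyy0
    -- comparison of the inner integrals
    have hinner_le : ∀ r ∈ Icc c y,
        (∫ t in c..r, mder a1 b1 c t * (V1 t + 1) * Ifun a1 b1 c (fun x => V1 x + 1) n t) ≤
        ∫ t in c..r, mder a2 b2 c t * (V2 t + 1) * Ifun a2 b2 c (fun x => V2 x + 1) n t := by
      intro r hr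
      have hr0 : (r : EReal) < y0 := lt_of_le_of_lt (by exact_mod_cast hr.2) hyy0
      have hii1 : IntervalIntegrable
          (fun t => mder a1 b1 c t * (V1 t + 1) * Ifun a1 b1 c (fun x => V1 x + 1) n t)
          volume c r := by
        have := B1int.mono_set (Icc_subset_Icc le_rfl hr.2)
        rw [← uIcc_of_le hr.1] at this
        exact this.intervalIntegrable
      have hii2 : IntervalIntegrable
          (fun t => mder a2 b2 c t * (V2 t + 1) * Ifun a2 b2 c (fun x => V2 x + 1) n t)
          volume c r := by
        have := B2int.mono_set (Icc_subset_Icc le_rfl hr.2)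
        rw [← uIcc_of_le hr.1] at this
        exact this.intervalIntegrable
      refine intervalIntegral.integral_mono_ae_restrict hr.1 hii1 hii2 ?_
      have hsubT : Icc c r ⊆ {x : ℝ | c ≤ x ∧ (x : EReal) < y0} := Icc_sub_T hc le_rfl hr0
      have hsubEI : Icc c r ⊆ EI x0 y0 := Icc_sub_EI hc hr0
      filter_upwards [ae_restrict_of_ae_restrict_of_subset hsubT IH,
        ae_restrict_of_ae_restrict_of_subset hsubT hcomp,
        ae_restrict_of_ae_restrict_of_subset hsubEI ha2pos,
        ae_restrict_mem measurableSet_Icc] with t hIH hct ha2t ht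
      have hW1 : 0 ≤ V1 t + 1 := by have := hV1nn t (hsubEI ht); linarith
      have hm2 : 0 ≤ mder a2 b2 c t :=
        mul_nonneg (le_of_lt (one_div_pos.2 ha2t)) (Real.exp_nonneg _)
      have hI2 : 0 ≤ Ifun a2 b2 c (fun x => V2 x + 1) n t := B2nn t ⟨ht.1, ht.2.trans hr.2⟩
      calc mder a1 b1 c t * (V1 t + 1) * Ifun a1 b1 c (fun x => V1 x + 1) n t
          = (V1 t + 1) * (mder a1 b1 c t * Ifun a1 b1 c (fun x => V1 x + 1) n t) := by ring
        _ ≤ (V1 t + 1) * (mder a2 b2 c t * Ifun a2 b2 c (fun x => V2 x + 1) n t) :=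
            mul_le_mul_of_nonneg_left hIH hW1
        _ ≤ (V2 t + 1) * (mder a2 b2 c t * Ifun a2 b2 c (fun x => V2 x + 1) n t) :=
            mul_le_mul_of_nonneg_right (by linarith [hct.2.1]) (mul_nonneg hm2 hI2)
        _ = mder a2 b2 c t * (V2 t + 1) * Ifun a2 b2 c (fun x => V2 x + 1) n t := by ring
    have hinner1nn : ∀ r ∈ Icc c y,
        0 ≤ ∫ t in c..r, mder a1 b1 c t * (V1 t + 1) * Ifun a1 b1 c (fun x => V1 x + 1) n t :=
      fun r hr => inner_nonneg ha1pos hV1nn hc hyy0 B1nn hr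
    -- reduce to an integral comparison over [c, y]
    have hsder1 : ContinuousOn (sder a1 b1 c) (Icc c y) :=
      Real.continuous_exp.comp_continuousOn (P_contOn ha1 hb1 hb1B ha1invB hc hcyT hyy0).neg
    have hsder2 : ContinuousOn (sder a2 b2 c) (Icc c y) :=
      Real.continuous_exp.comp_continuousOn (P_contOn ha2 hb2 hb2B ha2invB hc hcyT hyy0).neg
    have hii1 : IntervalIntegrable (fun r => mder a1 b1 c y *
        (sder a1 b1 c r *
          ∫ t in c..r, mder a1 b1 c t * (V1 t + 1) * Ifun a1 b1 c (fun x => V1 x + 1) n t))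
        volume c y := by
      have hC : ContinuousOn (fun r => mder a1 b1 c y *
          (sder a1 b1 c r *
            ∫ t in c..r, mder a1 b1 c t * (V1 t + 1) * Ifun a1 b1 c (fun x => V1 x + 1) n t))
          (Icc c y) := continuousOn_const.mul (hsder1.mul B1innerC)
      rw [← uIcc_of_le hcyT] at hC
      exact hC.intervalIntegrable
    have hii2 : IntervalIntegrable (fun r => mder a2 b2 c y *
        (sder a2 b2 c r *
          ∫ t in c..r, mder a2 b2 c t * (V2 t + 1) * Ifun a2 b2 c (fun x => V2 x + 1) n t))
        volume c y := by
      have hC : ContinuousOn (fun r => mder a2 b2 c y *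
          (sder a2 b2 c r *
            ∫ t in c..r, mder a2 b2 c t * (V2 t + 1) * Ifun a2 b2 c (fun x => V2 x + 1) n t))
          (Icc c y) := continuousOn_const.mul (hsder2.mul B2innerC)
      rw [← uIcc_of_le hcyT] at hC
      exact hC.intervalIntegrable
    have key : (∫ r in c..y, mder a1 b1 c y *
        (sder a1 b1 c r *
          ∫ t in c..r, mder a1 b1 c t * (V1 t + 1) * Ifun a1 b1 c (fun x => V1 x + 1) n t)) ≤
        ∫ r in c..y, mder a2 b2 c y *
        (sder a2 b2 c r *
          ∫ t in c..r, mder a2 b2 c t * (V2 t + 1) * Ifun a2 b2 c (fun x => V2 x + 1) n t) := by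
      refine intervalIntegral.integral_mono_on hcyT hii1 hii2 ?_
      intro r hr
      have hr0 : (r : EReal) < y0 := lt_of_le_of_lt (by exact_mod_cast hr.2) hyy0
      have hsub1 : (∫ t in c..y, b1 t / a1 t) - (∫ t in c..r, b1 t / a1 t)
          = ∫ t in r..y, b1 t / a1 t :=
        intervalIntegral.integral_interval_sub_left
          (K_ii ha1 hb1 hb1B ha1invB hc le_rfl hcyT hyy0)
          (K_ii ha1 hb1 hb1B ha1invB hc le_rfl hr.1 hr0)
      have hsub2 : (∫ t in c..y, b2 t / a2 t) - (∫ t in c..r, b2 t / a2 t)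
          = ∫ t in r..y, b2 t / a2 t :=
        intervalIntegral.integral_interval_sub_left
          (K_ii ha2 hb2 hb2B ha2invB hc le_rfl hcyT hyy0)
          (K_ii ha2 hb2 hb2B ha2invB hc le_rfl hr.1 hr0)
      have hE1 : mder a1 b1 c y *
          (sder a1 b1 c r *
            ∫ t in c..r, mder a1 b1 c t * (V1 t + 1) * Ifun a1 b1 c (fun x => V1 x + 1) n t)
          = (1 / a1 y) * Real.exp (∫ t in r..y, b1 t / a1 t) *
            ∫ t in c..r, mder a1 b1 c t * (V1 t + 1) * Ifun a1 b1 c (fun x => V1 x + 1) n t := by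
        simp only [mder, sder]
        rw [← hsub1, Real.exp_sub, Real.exp_neg]
        ring
      have hE2 : mder a2 b2 c y *
          (sder a2 b2 c r *
            ∫ t in c..r, mder a2 b2 c t * (V2 t + 1) * Ifun a2 b2 c (fun x => V2 x + 1) n t)
          = (1 / a2 y) * Real.exp (∫ t in r..y, b2 t / a2 t) *
            ∫ t in c..r, mder a2 b2 c t * (V2 t + 1) * Ifun a2 b2 c (fun x => V2 x + 1) n t := by
        simp only [mder, sder]
        rw [← hsub2, Real.exp_sub, Real.exp_neg]
        ring
      rw [hE1, hE2]
      have c1 : 1 / a1 y ≤ 1 / a2 y := one_div_le_one_div_of_le h2pos hcy.1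
      have cE := P_comp ha1 hb1 ha2 hb2 hb1B ha1invB hb2B ha2invB hc hcomp
        hr.1 hr.2 hyy0
      exact mul_le_mul
        (mul_le_mul c1 (Real.exp_le_exp.2 cE) (Real.exp_nonneg _)
          (le_of_lt (one_div_pos.2 h2pos)))
        (hinner_le r hr) (hinner1nn r hr)
        (mul_nonneg (le_of_lt (one_div_pos.2 h2pos)) (Real.exp_nonneg _))
    calc mder a1 b1 c y * Ifun a1 b1 c (fun x => V1 x + 1) (n + 1) y
        = ∫ r in c..y, mder a1 b1 c y *
          (sder a1 b1 c r *
            ∫ t in c..r, mder a1 b1 c t * (V1 t + 1) * Ifun a1 b1 c (fun x => V1 x + 1) n t) :=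
          (intervalIntegral.integral_const_mul _ _).symm
      _ ≤ ∫ r in c..y, mder a2 b2 c y *
          (sder a2 b2 c r *
            ∫ t in c..r, mder a2 b2 c t * (V2 t + 1) * Ifun a2 b2 c (fun x => V2 x + 1) n t) := key
      _ = mder a2 b2 c y * Ifun a2 b2 c (fun x => V2 x + 1) (n + 1) y :=
          intervalIntegral.integral_const_mul _ _

end Stmt15Aux

/-- termwise comparison: under the comparison hypotheses toward `y0`,
for every `n`, `B_{n,1} ≤ B_{n,2}` where
`B_{n,k} = ∫_c^{y0} m_k'(y) I_{n,k}^{V_k+1}(y) dy`. -/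
theorem stmt15
    (x0 y0 : EReal) (hxy : x0 < y0)
    (a1 b1 V1 a2 b2 V2 : ℝ → ℝ) (c : ℝ)
    (hc : x0 < (c : EReal) ∧ (c : EReal) < y0)
    (ha1 : Measurable a1) (hb1 : Measurable b1) (hV1 : Measurable V1)
    (ha2 : Measurable a2) (hb2 : Measurable b2) (hV2 : Measurable V2)
    (ha1B : LocEssBdd x0 y0 a1) (hb1B : LocEssBdd x0 y0 b1) (hV1B : LocEssBdd x0 y0 V1)
    (ha1invB : LocEssBdd x0 y0 (fun x => 1 / a1 x))
    (ha2B : LocEssBdd x0 y0 a2) (hb2B : LocEssBdd x0 y0 b2) (hV2B : LocEssBdd x0 y0 V2)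
    (ha2invB : LocEssBdd x0 y0 (fun x => 1 / a2 x))
    (ha1pos : ∀ᵐ x ∂(volume.restrict (EI x0 y0)), 0 < a1 x)
    (ha2pos : ∀ᵐ x ∂(volume.restrict (EI x0 y0)), 0 < a2 x)
    (hV1nn : ∀ x ∈ EI x0 y0, 0 ≤ V1 x)
    (hV2nn : ∀ x ∈ EI x0 y0, 0 ≤ V2 x)
    (hcomp : ∀ᵐ x ∂(volume.restrict {x : ℝ | c ≤ x ∧ (x : EReal) < y0}),
      a2 x ≤ a1 x ∧ V1 x ≤ V2 x ∧ b1 x / a1 x ≤ b2 x / a2 x) :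
    ∀ n : ℕ,
      ∫⁻ y in {y : ℝ | c < y ∧ (y : EReal) < y0},
          ENNReal.ofReal (mder a1 b1 c y * Ifun a1 b1 c (fun x => V1 x + 1) n y) ≤
        ∫⁻ y in {y : ℝ | c < y ∧ (y : EReal) < y0},
          ENNReal.ofReal (mder a2 b2 c y * Ifun a2 b2 c (fun x => V2 x + 1) n y) := by
  intro n
  have hkey := Stmt15Aux.comp_ae hc.1 ha1 hb1 hV1 ha2 hb2 hV2 hb1B hV1B ha1invB
    hb2B hV2B ha2invB ha1pos ha2pos hV1nn hV2nn hcomp n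
  have hsub : {y : ℝ | c < y ∧ (y : EReal) < y0} ⊆ {x : ℝ | c ≤ x ∧ (x : EReal) < y0} :=
    fun t ht => ⟨le_of_lt ht.1, ht.2⟩
  have hkey' := ae_restrict_of_ae_restrict_of_subset hsub hkey
  exact lintegral_mono_ae (hkey'.mono fun y h => ENNReal.ofReal_le_ofReal h)
end
end
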